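/- Let Π_{k,μ} = (p₁^{k+1}(p₁^{k+1})ᵀ/‖p₁^{k+1}‖²) ⊗ ⋯ ⊗ (p_{μ−1}^{k+1}(p_{μ−1}^{k+1})ᵀ/‖p_{μ−1}^{k+1}‖²) ⊗ Id ⊗ (p_{μ+1}ᵏ(p_{μ+1}ᵏ)ᵀ/‖p_{μ+1}ᵏ‖²) ⊗ ⋯ ⊗ (p_dᵏ(p_dᵏ)ᵀ/‖p_dᵏ‖²) acting on ⊗_μ ℝ^{n_μ}, with all p's nonzero. Then Π_{k,μ} is an orthogonal projection (symmetric and idempotent), and the ALS micro-step satisfies v_{k,μ+1} = v_{k,μ} + Π_{k,μ}(b − v_{k,μ}), where v_{k,μ} = p₁^{k+1}⊗⋯⊗p_{μ−1}^{k+1}⊗p_μᵏ⊗⋯⊗p_dᵏ and v_{k,μ+1} is obtained by replacing p_μᵏ with the ALS update p_μ^{k+1} = Π-contraction of b. -/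

import Mathlib

/-
`Π_{k,μ}` is the Kronecker product, over the modes, of the identity at mode `μ` and of
the rank-one projections `q qᵀ / ‖q‖²` elsewhere. Transposition and multiplication of such
products act factorwise, so symmetry and idempotence reduce to the factors, and `Π_{k,μ}` fixes
the rank-one tensor `⊗ q_ν` because each factor fixes its `q_ν`. The right-hand side of the
micro-step is therefore `Π_{k,μ} b`, and contracting `b` against the `q_ν / ‖q_ν‖²` with
`ν ≠ μ` is exactly the ALS update of the `μ`-th factor.
-/

open scoped BigOperators

/-- Rank-one tensor in `⊗_{μ} ℝ^{n μ}`, modeled as `EuclideanSpace ℝ (Π μ, Fin (n μ))`. -/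
noncomputable def rankOne {d : ℕ} (n : Fin d → ℕ)
    (p : ∀ μ, EuclideanSpace ℝ (Fin (n μ))) :
    EuclideanSpace ℝ (∀ μ, Fin (n μ)) :=
  WithLp.toLp 2 fun i => ∏ μ, p μ (i μ)

/-- The objective function `f(v) = (1/‖b‖²)(½⟨v,v⟩ − ⟨b,v⟩)`. -/
noncomputable def fobj {ι : Type*} [Fintype ι] (b v : EuclideanSpace ℝ ι) : ℝ :=
  (1 / ‖b‖ ^ 2) * ((1 / 2) * (inner ℝ v v : ℝ) - (inner ℝ b v : ℝ))


/-- The ALS projection `Π_{k,μ}`: the tensor product of the rank-one orthogonal projections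
`q_ν q_νᵀ/‖q_ν‖²` for `ν ≠ μ` with the identity at mode `μ`. -/
noncomputable def projALS {d : ℕ} (n : Fin d → ℕ) (μ : Fin d)
    (q : ∀ ν, EuclideanSpace ℝ (Fin (n ν)))
    (x : EuclideanSpace ℝ (∀ ν, Fin (n ν))) : EuclideanSpace ℝ (∀ ν, Fin (n ν)) :=
  WithLp.toLp 2 fun i => ∑ i' : ∀ ν, Fin (n ν),
    (∏ ν, if ν = μ then (if i' ν = i ν then (1 : ℝ) else 0)
      else q ν (i ν) * q ν (i' ν) / ‖q ν‖ ^ 2) * x i'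

open Matrix

namespace Matrix

section piKronecker

variable {R ι : Type*} [CommSemiring R] [Fintype ι] {l m n : ι → Type*}

def piKronecker (A : ∀ i, Matrix (m i) (n i) R) : Matrix (∀ i, m i) (∀ i, n i) R :=
  of fun x y => ∏ i, A i (x i) (y i)

@[simp]
lemma piKronecker_apply (A : ∀ i, Matrix (m i) (n i) R) (x : ∀ i, m i) (y : ∀ i, n i) :
    piKronecker A x y = ∏ i, A i (x i) (y i) := rfl

lemma transpose_piKronecker (A : ∀ i, Matrix (m i) (n i) R) :
    (piKronecker A)ᵀ = piKronecker fun i => (A i)ᵀ := rfl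

lemma IsSymm.piKronecker {A : ∀ i, Matrix (m i) (m i) R} (hA : ∀ i, (A i).IsSymm) :
    (piKronecker A).IsSymm := by
  rw [IsSymm, transpose_piKronecker]
  exact congrArg _ (funext hA)

variable [DecidableEq ι]

lemma piKronecker_mul_piKronecker [∀ i, Fintype (m i)] (A : ∀ i, Matrix (l i) (m i) R)
    (B : ∀ i, Matrix (m i) (n i) R) :
    piKronecker A * piKronecker B = piKronecker fun i => A i * B i := by
  ext x z
  simp only [mul_apply, piKronecker_apply, ← Finset.prod_mul_distrib]
  exact (Fintype.prod_sum fun i y => A i (x i) y * B i y (z i)).symm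

lemma IsIdempotentElem.piKronecker [∀ i, Fintype (m i)] {A : ∀ i, Matrix (m i) (m i) R}
    (hA : ∀ i, IsIdempotentElem (A i)) : IsIdempotentElem (piKronecker A) := by
  rw [IsIdempotentElem, piKronecker_mul_piKronecker]
  exact congrArg _ (funext hA)

lemma piKronecker_mulVec_prod [∀ i, Fintype (n i)] (A : ∀ i, Matrix (m i) (n i) R)
    (v : ∀ i, n i → R) :
    piKronecker A *ᵥ (fun y => ∏ i, v i (y i)) = fun x => ∏ i, (A i *ᵥ v i) (x i) := by
  ext x
  simp only [mulVec, dotProduct, piKronecker_apply, ← Finset.prod_mul_distrib]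
  exact (Fintype.prod_sum fun i y => A i (x i) y * v i y).symm

end piKronecker

section rankOneProj

variable {R n : Type*} [Field R] [Fintype n]

def rankOneProj (v : n → R) : Matrix n n R := (v ⬝ᵥ v)⁻¹ • vecMulVec v v

lemma isSymm_rankOneProj (v : n → R) : (rankOneProj v).IsSymm := by
  rw [IsSymm, rankOneProj, transpose_smul, transpose_vecMulVec]

variable {v : n → R} (hv : v ⬝ᵥ v ≠ 0)
include hv

lemma rankOneProj_mulVec_self : rankOneProj v *ᵥ v = v := by
  rw [rankOneProj, smul_mulVec, vecMulVec_mulVec, op_smul_eq_smul, smul_smul,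
    inv_mul_cancel₀ hv, one_smul]

lemma isIdempotentElem_rankOneProj : IsIdempotentElem (rankOneProj v) := by
  rw [IsIdempotentElem]
  nth_rw 2 [rankOneProj]
  rw [Matrix.mul_smul, mul_vecMulVec, rankOneProj_mulVec_self hv, rankOneProj]

end rankOneProj

lemma isSymmetricProjection_toEuclideanLin_piKronecker {ι : Type*} [Fintype ι] [DecidableEq ι]
    {m : ι → Type*} [∀ i, Fintype (m i)] [∀ i, DecidableEq (m i)]
    {A : ∀ i, Matrix (m i) (m i) ℝ} (hsymm : ∀ i, (A i).IsSymm)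
    (hidem : ∀ i, IsIdempotentElem (A i)) :
    (toEuclideanLin (piKronecker A)).IsSymmetricProjection where
  isIdempotentElem := by
    rw [IsIdempotentElem, Module.End.mul_eq_comp, ← toLpLin_mul_same]
    exact congrArg _ (IsIdempotentElem.piKronecker hidem)
  isSymmetric :=
    isSymmetric_toEuclideanLin_iff.mpr (isHermitian_iff_isSymm.mpr (.piKronecker hsymm))

end Matrix

lemma EuclideanSpace.dotProduct_self_eq_norm_sq {κ : Type*} [Fintype κ]
    (x : EuclideanSpace ℝ κ) : x.ofLp ⬝ᵥ x.ofLp = ‖x‖ ^ 2 := by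
  rw [← real_inner_self_eq_norm_sq, EuclideanSpace.inner_eq_star_dotProduct, star_trivial]

lemma EuclideanSpace.dotProduct_self_ne_zero {κ : Type*} [Fintype κ] {x : EuclideanSpace ℝ κ}
    (hx : x ≠ 0) : x.ofLp ⬝ᵥ x.ofLp ≠ 0 :=
  (dotProduct_self_eq_zero (R := ℝ)).not.mpr (by simpa using hx)

section ALS

variable {d : ℕ} {n : Fin d → ℕ} (μ : Fin d) (q : ∀ ν, EuclideanSpace ℝ (Fin (n ν)))

noncomputable def alsFactor (ν : Fin d) : Matrix (Fin (n ν)) (Fin (n ν)) ℝ :=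
  if ν = μ then 1 else rankOneProj (q ν).ofLp

lemma isSymm_alsFactor (ν : Fin d) : (alsFactor μ q ν).IsSymm := by
  unfold alsFactor
  split_ifs
  exacts [isSymm_one, isSymm_rankOneProj _]

lemma projALS_eq_toEuclideanLin :
    projALS n μ q = toEuclideanLin (piKronecker (alsFactor μ q)) := by
  ext x i
  simp only [projALS, toEuclideanLin, toLpLin_apply, mulVec, dotProduct, piKronecker_apply]
  refine Finset.sum_congr rfl fun i' _ => congrArg (· * _) (Finset.prod_congr rfl fun ν _ => ?_)
  by_cases h : ν = μ
  · simp [alsFactor, h, one_apply, eq_comm]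
  · simp [alsFactor, h, rankOneProj, vecMulVec_apply, EuclideanSpace.dotProduct_self_eq_norm_sq]
    ring

section

variable {q} (hq : ∀ ν, q ν ≠ 0)
include hq

lemma isIdempotentElem_alsFactor (ν : Fin d) : IsIdempotentElem (alsFactor μ q ν) := by
  unfold alsFactor
  split_ifs
  exacts [IsIdempotentElem.one,
    isIdempotentElem_rankOneProj (EuclideanSpace.dotProduct_self_ne_zero (hq ν))]

lemma alsFactor_mulVec_self (ν : Fin d) : alsFactor μ q ν *ᵥ (q ν).ofLp = (q ν).ofLp := by
  unfold alsFactor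
  split_ifs
  exacts [one_mulVec _, rankOneProj_mulVec_self (EuclideanSpace.dotProduct_self_ne_zero (hq ν))]

lemma projALS_rankOne : projALS n μ q (rankOne n q) = rankOne n q := by
  rw [projALS_eq_toEuclideanLin, rankOne, toLpLin_toLp, toLin'_apply,
    piKronecker_mulVec_prod]
  simp_rw [alsFactor_mulVec_self μ hq]

end

noncomputable def alsUpdate (b : EuclideanSpace ℝ (∀ ν, Fin (n ν))) :
    EuclideanSpace ℝ (Fin (n μ)) :=
  WithLp.toLp 2 fun j => ∑ i : ∀ ν, Fin (n ν),
    if i μ = j then (∏ ν ∈ Finset.univ.erase μ, q ν (i ν) / ‖q ν‖ ^ 2) * b i else 0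

lemma rankOne_update_apply (p : EuclideanSpace ℝ (Fin (n μ))) (i : ∀ ν, Fin (n ν)) :
    rankOne n (Function.update q μ p) i = p (i μ) * ∏ ν ∈ Finset.univ.erase μ, q ν (i ν) := by
  rw [rankOne, WithLp.ofLp_toLp, ← Finset.mul_prod_erase _ _ (Finset.mem_univ μ),
    Function.update_self]
  congr 1
  exact Finset.prod_congr rfl fun ν hν => by rw [Function.update_of_ne (Finset.ne_of_mem_erase hν)]

lemma projALS_apply (x : EuclideanSpace ℝ (∀ ν, Fin (n ν))) (i : ∀ ν, Fin (n ν)) :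
    projALS n μ q x i = ∑ i' : ∀ ν, Fin (n ν), if i' μ = i μ then
      (∏ ν ∈ Finset.univ.erase μ, q ν (i ν) * q ν (i' ν) / ‖q ν‖ ^ 2) * x i' else 0 := by
  refine Finset.sum_congr rfl fun i' _ => ?_
  rw [← Finset.mul_prod_erase _ _ (Finset.mem_univ μ), if_pos rfl,
    Finset.prod_congr rfl fun ν hν => if_neg (Finset.ne_of_mem_erase hν)]
  split_ifs <;> simp

lemma projALS_eq_rankOne_update (b : EuclideanSpace ℝ (∀ ν, Fin (n ν))) :
    projALS n μ q b = rankOne n (Function.update q μ (alsUpdate μ q b)) := by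
  ext i
  rw [rankOne_update_apply, alsUpdate, WithLp.ofLp_toLp, Finset.sum_mul, projALS_apply]
  refine Finset.sum_congr rfl fun i' _ => ?_
  split_ifs
  · simp_rw [mul_div_assoc, Finset.prod_mul_distrib]
    ring
  · rw [zero_mul]

end ALS

/-- `Π_{k,μ}` is an orthogonal projection (symmetric and idempotent), and the ALS micro
step satisfies `v_{k,μ+1} = v_{k,μ} + Π_{k,μ}(b − v_{k,μ})`, where `v_{k,μ+1}` is obtained
from `v_{k,μ}` by replacing the `μ`-th factor with the ALS update. -/
theorem stmt18 {d : ℕ} (n : Fin d → ℕ) (μ : Fin d)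
    (b : EuclideanSpace ℝ (∀ ν, Fin (n ν)))
    (q : ∀ ν, EuclideanSpace ℝ (Fin (n ν))) (hq : ∀ ν, q ν ≠ 0)
    (pnew : EuclideanSpace ℝ (Fin (n μ)))
    (hpnew : pnew = (WithLp.toLp 2 fun jμ => ∑ i : ∀ ν, Fin (n ν),
      if i μ = jμ then (∏ ν ∈ Finset.univ.erase μ, q ν (i ν) / ‖q ν‖ ^ 2) * b i else 0 :
        EuclideanSpace ℝ (Fin (n μ)))) :
    (∀ x y : EuclideanSpace ℝ (∀ ν, Fin (n ν)),
        (inner ℝ (projALS n μ q x) y : ℝ) = (inner ℝ x (projALS n μ q y) : ℝ)) ∧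
      (∀ x, projALS n μ q (projALS n μ q x) = projALS n μ q x) ∧
      rankOne n (Function.update q μ pnew)
        = rankOne n q + projALS n μ q (b - rankOne n q) := by
  obtain ⟨hidem, hsymm⟩ := isSymmetricProjection_toEuclideanLin_piKronecker
    (isSymm_alsFactor μ q) (isIdempotentElem_alsFactor μ hq)
  rw [projALS_eq_toEuclideanLin]
  refine ⟨hsymm, fun x => congr($hidem x), ?_⟩
  rw [map_sub, ← projALS_eq_toEuclideanLin, projALS_rankOne μ hq, add_sub_cancel,
    projALS_eq_rankOne_update, hpnew, alsUpdate]
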